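/- arXiv:2106.01792 — 2 statements merged into one kernel-verified Lean document; each statement's English description precedes it below -/
import Mathlib

section
/- Let l ≥ 1 be an integer, D a finite set with |D| = l, (R_d)_{d∈D} a family of real numbers, R ∈ ℝ, τ ∈ [0,1], and α ∈ [τ/(l+1), (l+τ)/(l+1)). Define δ_τ := (|{d ∈ D : R_d > R}| + τ·(1 + |{d ∈ D : R_d = R}|))/(l+1). Let q := ⌈l + τ − (l+1)α⌉ (so that 1 ≤ q ≤ l), let w be the q-th smallest value of (R_d)_{d∈D}, and set r := |{d ∈ D : R_d ≤ w}| − q and v := (q−1) − |{d ∈ D : R_d < w}|. If τ ≤ ((l+1)α − ⌊(l+1)α − τ⌋ + r)/(r + v + 2), then δ_τ > α if and only if R < w. -/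
/-- The `q`-th smallest value (counted with multiplicity, `q` starting from 1) of a finite
family of real numbers: the `q`-th entry of the list of values sorted in nondecreasing order. -/
noncomputable def qthSmallest {D : Type*} [Fintype D] (x : D → ℝ) (q : ℕ) : ℝ :=
  (Multiset.sort (Finset.univ.val.map x) (· ≤ ·)).getD (q - 1) 0

theorem aux_ncard_countP (D : Type) [Fintype D] (Rd : D → ℝ) (P : ℝ → Prop) [DecidablePred P] :
    ({d : D | P (Rd d)} : Set D).ncard =
      (Multiset.sort (Finset.univ.val.map Rd) (· ≤ ·)).countP (fun x => decide (P x)) := by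
  rw [← Multiset.coe_countP, Multiset.sort_eq]
  have h1 : ({d : D | P (Rd d)} : Set D).ncard = (Finset.univ.filter (fun d => P (Rd d))).card := by
    rw [← Set.ncard_coe_finset]; congr 1; ext; simp
  rw [h1, Multiset.countP_map, Finset.card_filter]
  simp [Multiset.countP_eq_card_filter]
  rfl

theorem aux_countP_le_ge (s : List ℝ) (hs : s.Pairwise (· ≤ ·)) (i : ℕ) (hi : i < s.length) :
    i + 1 ≤ s.countP (fun x => decide (x ≤ s[i])) := by
  have hsub : (s.take (i+1)).Sublist s := List.take_sublist _ _
  have hall : ∀ a ∈ s.take (i+1), (fun x => decide (x ≤ s[i])) a = true := by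
    intro a ha
    rw [List.mem_iff_getElem] at ha
    obtain ⟨n, hn, rfl⟩ := ha
    have hn' : n ≤ i := by
      have := hn; rw [List.length_take] at this; omega
    simp only [List.getElem_take, decide_eq_true_eq]
    exact hs.rel_get_of_le (a := ⟨n, by omega⟩) (b := ⟨i, hi⟩) hn'
  have h1 : (s.take (i+1)).countP (fun x => decide (x ≤ s[i])) = (s.take (i+1)).length :=
    List.countP_eq_length.mpr hall
  have h2 := hsub.countP_le (p := fun x => decide (x ≤ s[i]))
  rw [h1, List.length_take] at h2
  omega

theorem aux_countP_lt_le (s : List ℝ) (hs : s.Pairwise (· ≤ ·)) (i : ℕ) (hi : i < s.length) :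
    s.countP (fun x => decide (x < s[i])) ≤ i := by
  have hsub : (s.drop i).Sublist s := List.drop_sublist _ _
  have hall : ∀ a ∈ s.drop i, (fun x => decide (s[i] ≤ x)) a = true := by
    intro a ha
    rw [List.mem_iff_getElem] at ha
    obtain ⟨n, hn, rfl⟩ := ha
    rw [List.getElem_drop]
    simp only [decide_eq_true_eq]
    have : i + n < s.length := by rw [List.length_drop] at hn; omega
    exact hs.rel_get_of_le (a := ⟨i, hi⟩) (b := ⟨i + n, this⟩) (by simp)
  have h1 : (s.drop i).countP (fun x => decide (s[i] ≤ x)) = (s.drop i).length :=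
    List.countP_eq_length.mpr hall
  have h2 := hsub.countP_le (p := fun x => decide (s[i] ≤ x))
  rw [h1, List.length_drop] at h2
  have h3 := List.length_eq_countP_add_countP (fun x => decide (x < s[i])) (l := s)
  have h4 : s.countP (fun a => decide ¬(decide (a < s[i]) = true)) =
      s.countP (fun x => decide (s[i] ≤ x)) := by
    apply List.countP_congr; intro x _; simp [not_lt]
  rw [h4] at h3
  omega

theorem aux_countP_split_le (s : List ℝ) (w : ℝ) :
    s.countP (fun x => decide (x ≤ w)) =
      s.countP (fun x => decide (x < w)) + s.countP (fun x => decide (x = w)) := by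
  have h := List.length_eq_countP_add_countP (fun x => decide (x < w))
      (l := s.filter (fun x => decide (x ≤ w)))
  rw [← List.countP_eq_length_filter, List.countP_filter, List.countP_filter] at h
  have h1 : s.countP (fun a => decide (a < w) && decide (a ≤ w)) =
      s.countP (fun x => decide (x < w)) := by
    apply List.countP_congr; intro x _
    by_cases hx : x < w <;> simp [hx, le_of_lt]
  have h2 : s.countP (fun a => decide ¬(decide (a < w) = true) && decide (a ≤ w)) =
      s.countP (fun x => decide (x = w)) := by
    apply List.countP_congr; intro x _
    constructor
    · intro hx; simp at hx ⊢; exact le_antisymm hx.2 hx.1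
    · intro hx; simp at hx ⊢; simp [hx]
  rw [h1, h2] at h
  exact h

theorem aux_countP_split_ge (s : List ℝ) (a : ℝ) :
    s.countP (fun x => decide (a ≤ x)) =
      s.countP (fun x => decide (a < x)) + s.countP (fun x => decide (x = a)) := by
  have h := List.length_eq_countP_add_countP (fun x => decide (a < x))
      (l := s.filter (fun x => decide (a ≤ x)))
  rw [← List.countP_eq_length_filter, List.countP_filter, List.countP_filter] at h
  have h1 : s.countP (fun x => decide (a < x) && decide (a ≤ x)) =
      s.countP (fun x => decide (a < x)) := by
    apply List.countP_congr; intro x _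
    by_cases hx : a < x <;> simp [hx, le_of_lt]
  have h2 : s.countP (fun x => decide ¬(decide (a < x) = true) && decide (a ≤ x)) =
      s.countP (fun x => decide (x = a)) := by
    apply List.countP_congr; intro x _
    constructor
    · intro hx; simp at hx ⊢; exact le_antisymm hx.1 hx.2
    · intro hx; simp at hx ⊢; simp [hx]
  rw [h1, h2] at h
  exact h

theorem aux_countP_le_add_gt (s : List ℝ) (w : ℝ) :
    s.countP (fun x => decide (x ≤ w)) + s.countP (fun x => decide (w < x)) = s.length := by
  have h := List.length_eq_countP_add_countP (fun x => decide (x ≤ w)) (l := s)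
  have h2 : s.countP (fun a => decide ¬(decide (a ≤ w) = true)) =
      s.countP (fun x => decide (w < x)) := by
    apply List.countP_congr; intro x _; simp [not_le]
  omega

theorem aux_countP_lt_add_ge (s : List ℝ) (w : ℝ) :
    s.countP (fun x => decide (x < w)) + s.countP (fun x => decide (w ≤ x)) = s.length := by
  have h := List.length_eq_countP_add_countP (fun x => decide (x < w)) (l := s)
  have h2 : s.countP (fun a => decide ¬(decide (a < w) = true)) =
      s.countP (fun x => decide (w ≤ x)) := by
    apply List.countP_congr; intro x _; simp [not_lt]
  omega

theorem stmt9 (l : ℕ) (hl : 1 ≤ l) (D : Type) [Fintype D] (hD : Fintype.card D = l)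
    (Rd : D → ℝ) (R : ℝ) (τ : ℝ) (hτ0 : 0 ≤ τ) (hτ1 : τ ≤ 1)
    (α : ℝ) (hα1 : τ / ((l : ℝ) + 1) ≤ α) (hα2 : α < ((l : ℝ) + τ) / ((l : ℝ) + 1))
    (δ : ℝ)
    (hδ : δ = ((({d : D | R < Rd d} : Set D).ncard : ℝ) +
        τ * (1 + (({d : D | Rd d = R} : Set D).ncard : ℝ))) / ((l : ℝ) + 1))
    (q : ℕ) (hq : q = ⌈(l : ℝ) + τ - ((l : ℝ) + 1) * α⌉₊)
    (w : ℝ) (hw : w = qthSmallest Rd q)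
    (rr vv : ℝ)
    (hr : rr = (({d : D | Rd d ≤ w} : Set D).ncard : ℝ) - (q : ℝ))
    (hv : vv = ((q : ℝ) - 1) - (({d : D | Rd d < w} : Set D).ncard : ℝ))
    (hcase : τ ≤ (((l : ℝ) + 1) * α - (⌊((l : ℝ) + 1) * α - τ⌋ : ℝ) + rr) / (rr + vv + 2)) :
    δ > α ↔ R < w := by
  classical
  obtain ⟨s, hs_def⟩ : ∃ s, s = Multiset.sort (Finset.univ.val.map Rd) (· ≤ ·) := ⟨_, rfl⟩
  have hsort : s.Pairwise (· ≤ ·) := hs_def ▸ Multiset.pairwise_sort _ _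
  have hlen : s.length = l := by
    rw [hs_def, Multiset.length_sort, Multiset.card_map, ← hD]; rfl
  have hl1 : (0:ℝ) < (l:ℝ) + 1 := by positivity
  have hxpos : 0 < (l:ℝ) + τ - ((l:ℝ)+1) * α := by
    rw [lt_div_iff₀ hl1] at hα2; linarith
  have hxle : (l:ℝ) + τ - ((l:ℝ)+1) * α ≤ l := by
    rw [div_le_iff₀ hl1] at hα1; linarith
  have hq1 : 1 ≤ q := by rw [hq]; exact Nat.one_le_ceil_iff.mpr hxpos
  have hql : q ≤ l := by rw [hq]; exact Nat.ceil_le.mpr hxle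
  have hqge : (l:ℝ) + τ - ((l:ℝ)+1) * α ≤ q := by rw [hq]; exact Nat.le_ceil _
  have hqlt : (q:ℝ) < (l:ℝ) + τ - ((l:ℝ)+1) * α + 1 := by
    rw [hq]; exact Nat.ceil_lt_add_one hxpos.le
  have hfloor : (⌊((l:ℝ)+1) * α - τ⌋ : ℝ) = (l:ℝ) - q := by
    have h1 : (q:ℤ) = ⌈(l:ℝ) + τ - ((l:ℝ)+1) * α⌉ := by
      rw [hq]; exact Int.natCast_ceil_eq_ceil hxpos.le
    have h2 : ((l:ℝ) + τ - ((l:ℝ)+1) * α) = (τ - (((l:ℝ)+1) * α)) + (l:ℤ) := by push_cast; ring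
    rw [h2, Int.ceil_add_intCast] at h1
    have h3 : (τ - ((l:ℝ)+1) * α) = -(((l:ℝ)+1) * α - τ) := by ring
    rw [h3, Int.ceil_neg] at h1
    have h4 : (⌊((l:ℝ)+1) * α - τ⌋ : ℤ) = (l:ℤ) - (q:ℤ) := by omega
    exact_mod_cast congrArg (Int.cast : ℤ → ℝ) h4
  have hidx : q - 1 < s.length := by omega
  have hw' : w = s[q-1] := by
    rw [hw]; show qthSmallest Rd q = _
    unfold qthSmallest
    rw [← hs_def]
    exact List.getD_eq_getElem s 0 hidx
  -- counts as opaque naturals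
  obtain ⟨A, hA⟩ : ∃ A, A = s.countP (fun x => decide (R < x)) := ⟨_, rfl⟩
  obtain ⟨E, hE⟩ : ∃ E, E = s.countP (fun x => decide (x = R)) := ⟨_, rfl⟩
  obtain ⟨Le, hLe⟩ : ∃ Le, Le = s.countP (fun x => decide (x ≤ w)) := ⟨_, rfl⟩
  obtain ⟨L, hL⟩ : ∃ L, L = s.countP (fun x => decide (x < w)) := ⟨_, rfl⟩
  have hδ' : δ = ((A:ℝ) + τ * (1 + (E:ℝ))) / ((l:ℝ) + 1) := by
    rw [hδ, aux_ncard_countP D Rd (fun x => R < x), aux_ncard_countP D Rd (fun x => x = R),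
      ← hs_def, ← hA, ← hE]
  have hr' : rr = (Le:ℝ) - q := by
    rw [hr, aux_ncard_countP D Rd (fun x => x ≤ w), ← hs_def, ← hLe]
  have hv' : vv = ((q:ℝ) - 1) - (L:ℝ) := by
    rw [hv, aux_ncard_countP D Rd (fun x => x < w), ← hs_def, ← hL]
  have f1 : q ≤ Le := by
    have h1 := aux_countP_le_ge s hsort (q-1) hidx
    rw [← hw', ← hLe] at h1; omega
  have f2 : L + 1 ≤ q := by
    have h1 := aux_countP_lt_le s hsort (q-1) hidx
    rw [← hw', ← hL] at h1; omega
  have hLel : Le + s.countP (fun x => decide (w < x)) = l := by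
    have h1 := aux_countP_le_add_gt s w; rw [hlen, ← hLe] at h1; exact h1
  have hδiff : (δ > α) ↔ ((l:ℝ)+1) * α < (A:ℝ) + τ * (1 + (E:ℝ)) := by
    rw [hδ', gt_iff_lt, lt_div_iff₀ hl1]; constructor <;> intro h <;> linarith
  rw [hδiff]
  constructor
  · -- hard direction
    intro h
    by_contra hnR
    push_neg at hnR
    rcases eq_or_lt_of_le hnR with heq | hlt
    · -- R = w
      have fA : A + Le = l := by
        have h1 := hLel; rw [heq] at h1; rw [hA]; omega
      have fE : L + E = Le := by
        have h1 := aux_countP_split_le s w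
        have h2 := hE; rw [← heq] at h2
        rw [← hLe, ← hL, ← h2] at h1; omega
      have hden : (0:ℝ) < rr + vv + 2 := by
        rw [hr', hv']
        have c1 : (q:ℝ) ≤ Le := by exact_mod_cast f1
        have c2 : (L:ℝ) + 1 ≤ q := by exact_mod_cast f2
        linarith
      have hcase' : τ * (rr + vv + 2) ≤ ((l:ℝ)+1) * α - ((l:ℝ) - q) + rr := by
        rw [← hfloor]
        calc τ * (rr + vv + 2)
            ≤ (((l:ℝ)+1) * α - (⌊((l:ℝ)+1) * α - τ⌋ : ℝ) + rr) / (rr + vv + 2) * (rr + vv + 2) :=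
              mul_le_mul_of_nonneg_right hcase hden.le
          _ = ((l:ℝ)+1) * α - (⌊((l:ℝ)+1) * α - τ⌋ : ℝ) + rr := by field_simp
      have cA : (A:ℝ) = (l:ℝ) - Le := by
        have h1 : (A:ℝ) + (Le:ℝ) = (l:ℝ) := by exact_mod_cast fA
        linarith
      have cE : (E:ℝ) = (Le:ℝ) - L := by
        have h1 : (L:ℝ) + (E:ℝ) = (Le:ℝ) := by exact_mod_cast fE
        linarith
      have hnum : (A:ℝ) + τ * (1 + (E:ℝ)) = ((l:ℝ) - Le) + τ * (rr + vv + 2) := by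
        rw [cA, cE, hr', hv']; ring
      rw [hnum] at h
      have hT : τ * (rr + vv + 2) ≤ ((l:ℝ)+1) * α - ((l:ℝ) - q) + ((Le:ℝ) - q) := by
        rw [← hr']; exact hcase'
      linarith
    · -- w < R
      have fAE : A + E + Le ≤ l := by
        have hsplit := aux_countP_split_ge s R
        have hmono : s.countP (fun x => decide (R ≤ x)) ≤ s.countP (fun x => decide (w < x)) := by
          apply List.countP_mono_left
          intro x _ hx
          simp only [decide_eq_true_eq] at hx ⊢
          linarith
        rw [← hA, ← hE] at hsplit
        omega
      have cAE : (A:ℝ) + (E:ℝ) + (Le:ℝ) ≤ (l:ℝ) := by exact_mod_cast fAE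
      have cLe : (q:ℝ) ≤ (Le:ℝ) := by exact_mod_cast f1
      have hτE : τ * (E:ℝ) ≤ (E:ℝ) := by
        nlinarith [Nat.cast_nonneg (α := ℝ) E]
      linarith
  · -- easy direction
    intro h
    have fGe : s.countP (fun x => decide (w ≤ x)) ≤ A := by
      rw [hA]
      apply List.countP_mono_left
      intro x _ hx
      simp only [decide_eq_true_eq] at hx ⊢
      linarith
    have fLGe : L + s.countP (fun x => decide (w ≤ x)) = l := by
      have h1 := aux_countP_lt_add_ge s w; rw [hlen, ← hL] at h1; exact h1
    have fA' : l + 1 ≤ A + q := by omega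
    have cA : (l:ℝ) + 1 ≤ (A:ℝ) + q := by exact_mod_cast fA'
    have hτE : 0 ≤ τ * (E:ℝ) := by positivity
    linarith
end

section
/- Let p ≥ 1 and l ≥ 1 be integers, let D be a finite set with |D| = l, and let q be an integer with 1 ≤ q ≤ l. For each j ∈ {1,…,p} let T_j be a nonempty set, let s_j : T_j → ℝ satisfy s_j(t) > 0 for all t, and for each d ∈ D let r_{d,j} : T_j → ℝ be such that t ↦ |r_{d,j}(t)|/s_j(t) is bounded above on T_j. Define the multivariate scores R_d := max_{1≤j≤p} sup_{t∈T_j} |r_{d,j}(t)|/s_j(t), let k be the q-th smallest value of (R_d)_{d∈D}, and for each j and each t ∈ T_j let k̃_j(t) be the q-th smallest value of the family (|r_{d,j}(t)|/s_j(t))_{d∈D}. Then k̃_j(t) ≤ k for every j ∈ {1,…,p} and every t ∈ T_j; consequently, for any functions y_j, μ_j : T_j → ℝ, if |y_j(t) − μ_j(t)| ≤ k̃_j(t) · s_j(t) for all j and all t ∈ T_j, then |y_j(t) − μ_j(t)| ≤ k · s_j(t) for all j and all t ∈ T_j. -/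
theorem List.Pairwise.getElem_le_iff_lt_countP {α : Type*} [LinearOrder α] {L : List α}
    (hL : L.Pairwise (· ≤ ·)) {i : ℕ} (hi : i < L.length) (c : α) :
    L[i] ≤ c ↔ i < L.countP (· ≤ c) := by
  have hsplit : L = L.take i ++ L[i] :: L.drop (i + 1) := by
    rw [List.getElem_cons_drop, List.take_append_drop]
  have hlen : (L.take i).length = i := by simp; omega
  have hL' := hsplit ▸ hL
  simp only [List.pairwise_append, List.pairwise_cons, List.mem_cons] at hL'
  obtain ⟨-, ⟨hmid, -⟩, hleft⟩ := hL'
  have hcount : L.countP (· ≤ c) = (L.take i).countP (· ≤ c) + (if L[i] ≤ c then 1 else 0)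
      + (L.drop (i + 1)).countP (· ≤ c) := by
    conv_lhs => rw [hsplit]
    simp only [List.countP_append, List.countP_cons, decide_eq_true_eq]
    omega
  rw [hcount]
  constructor
  · intro hc
    have htake : (L.take i).countP (· ≤ c) = i := by
      rw [List.countP_eq_length.mpr fun a ha => by simpa using (hleft a ha _ (.inl rfl)).trans hc,
        hlen]
    rw [htake, if_pos hc]
    omega
  · intro hlt
    by_contra! hc
    have hdrop : (L.drop (i + 1)).countP (· ≤ c) = 0 :=
      List.countP_eq_zero.mpr fun b hb => by simpa using hc.trans_le (hmid b hb)
    have htake : (L.take i).countP (· ≤ c) ≤ i := List.countP_le_length.trans_eq hlen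
    rw [hdrop, if_neg hc.not_ge] at hlt
    omega

theorem Multiset.countP_sort {α : Type*} (s : Multiset α) (r : α → α → Prop) [DecidableRel r]
    [IsTrans α r] [Std.Antisymm r] [Std.Total r] (p : α → Prop) [DecidablePred p] :
    (s.sort r).countP p = s.countP p := by
  rw [← Multiset.coe_countP, Multiset.sort_eq]

theorem Multiset.sort_map_getD_mono {ι α : Type*} [LinearOrder α] (m : Multiset ι)
    {f g : ι → α} (hfg : ∀ i, f i ≤ g i) (n : ℕ) (a : α) :
    ((m.map f).sort (· ≤ ·)).getD n a ≤ ((m.map g).sort (· ≤ ·)).getD n a := by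
  have hlen : ((m.map f).sort (· ≤ ·)).length = ((m.map g).sort (· ≤ ·)).length := by
    simp only [Multiset.length_sort, Multiset.card_map]
  by_cases hn : n < ((m.map g).sort (· ≤ ·)).length
  · rw [List.getD_eq_getElem _ _ (hlen ▸ hn), List.getD_eq_getElem _ _ hn,
      (Multiset.pairwise_sort _ _).getElem_le_iff_lt_countP]
    set c := ((m.map g).sort (· ≤ ·))[n]
    have hg : n < ((m.map g).sort (· ≤ ·)).countP (· ≤ c) :=
      ((Multiset.pairwise_sort _ _).getElem_le_iff_lt_countP hn c).mp le_rfl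
    have hfewer : (m.map g).countP (· ≤ c) ≤ (m.map f).countP (· ≤ c) := by
      simp only [Multiset.countP_map]
      exact Multiset.card_le_card
        (Multiset.monotone_filter_right _ fun i hi => (hfg i).trans hi)
    rw [Multiset.countP_sort] at hg ⊢
    omega
  · rw [List.getD_eq_default _ _ (by omega), List.getD_eq_default _ _ (by omega)]

theorem qthSmallest_mono {D : Type*} [Fintype D] {x y : D → ℝ} (hxy : ∀ d, x d ≤ y d)
    (q : ℕ) : qthSmallest x q ≤ qthSmallest y q :=
  Multiset.sort_map_getD_mono _ hxy _ _

theorem stmt13_general (p : ℕ)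
    (D : Type) [Fintype D]
    (q : ℕ)
    (τ : Fin p → Type) (T : (j : Fin p) → Set (τ j))
    (s : (j : Fin p) → τ j → ℝ) (hs : ∀ j, ∀ t ∈ T j, 0 < s j t)
    (r : D → (j : Fin p) → τ j → ℝ)
    (hbdd : ∀ d j, BddAbove ((fun t => |r d j t| / s j t) '' T j))
    (Rm : D → ℝ)
    (hRm : ∀ d, Rm d = ⨆ j : Fin p, sSup ((fun t => |r d j t| / s j t) '' T j))
    (k : ℝ) (hk : k = qthSmallest Rm q)
    (ktil : (j : Fin p) → τ j → ℝ)
    (hktil : ∀ j, ∀ t ∈ T j, ktil j t = qthSmallest (fun d => |r d j t| / s j t) q) :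
    (∀ j : Fin p, ∀ t ∈ T j, ktil j t ≤ k) ∧
      ∀ y μ : (j : Fin p) → τ j → ℝ,
        (∀ j : Fin p, ∀ t ∈ T j, |y j t - μ j t| ≤ ktil j t * s j t) →
          ∀ j : Fin p, ∀ t ∈ T j, |y j t - μ j t| ≤ k * s j t := by
  have hktil_le : ∀ j, ∀ t ∈ T j, ktil j t ≤ k := by
    intro j t ht
    rw [hktil j t ht, hk]
    refine qthSmallest_mono (fun d => ?_) q
    rw [hRm d]
    exact le_ciSup_of_le (Set.finite_range _).bddAbove j (le_csSup (hbdd d j) ⟨t, ht, rfl⟩)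
  refine ⟨hktil_le, fun y μ hy j t ht => ?_⟩
  exact (hy j t ht).trans (mul_le_mul_of_nonneg_right (hktil_le j t ht) (hs j t ht).le)

theorem stmt13 (p l : ℕ) (hp : 1 ≤ p) (hl : 1 ≤ l)
    (D : Type) [Fintype D] (hD : Fintype.card D = l)
    (q : ℕ) (hq1 : 1 ≤ q) (hq2 : q ≤ l)
    (τ : Fin p → Type) (T : (j : Fin p) → Set (τ j)) (hTne : ∀ j, (T j).Nonempty)
    (s : (j : Fin p) → τ j → ℝ) (hs : ∀ j, ∀ t ∈ T j, 0 < s j t)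
    (r : D → (j : Fin p) → τ j → ℝ)
    (hbdd : ∀ d j, BddAbove ((fun t => |r d j t| / s j t) '' T j))
    (Rm : D → ℝ)
    (hRm : ∀ d, Rm d = ⨆ j : Fin p, sSup ((fun t => |r d j t| / s j t) '' T j))
    (k : ℝ) (hk : k = qthSmallest Rm q)
    (ktil : (j : Fin p) → τ j → ℝ)
    (hktil : ∀ j, ∀ t ∈ T j, ktil j t = qthSmallest (fun d => |r d j t| / s j t) q) :
    (∀ j : Fin p, ∀ t ∈ T j, ktil j t ≤ k) ∧
      ∀ y μ : (j : Fin p) → τ j → ℝ,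
        (∀ j : Fin p, ∀ t ∈ T j, |y j t - μ j t| ≤ ktil j t * s j t) →
          ∀ j : Fin p, ∀ t ∈ T j, |y j t - μ j t| ≤ k * s j t :=
  stmt13_general p D q τ T s hs r hbdd Rm hRm k hk ktil hktil
end
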